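/- arXiv:2508.04653 — 3 statements merged into one kernel-verified Lean document; each statement's English description precedes it below -/
import Mathlib

section
/- There exists a strictly positive, decreasing sequence (a_n) with a_n ∈ (0, 10⁻³) for all n, such that Σ_{n=1}^∞ a_n² = 1 and Σ_{n=1}^∞ a_n² · log(1/a_n) = ∞. -/
open Real Filter

noncomputable def FF (n : ℕ) : ℝ := 1 / (n * (1 + Real.log n) ^ 2)
noncomputable def GG (n : ℕ) : ℝ := 1 / (n * (1 + Real.log n))

lemma one_le_onelog {n : ℕ} (hn : 1 ≤ n) : 1 ≤ 1 + Real.log n := by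
  have : (0:ℝ) ≤ Real.log n := Real.log_nonneg (by exact_mod_cast hn)
  linarith

lemma FF_pos {n : ℕ} (hn : 1 ≤ n) : 0 < FF n := by
  have h1 := one_le_onelog hn
  have : (0:ℝ) < n := by exact_mod_cast hn
  unfold FF; positivity

lemma GG_pos {n : ℕ} (hn : 1 ≤ n) : 0 < GG n := by
  have h1 := one_le_onelog hn
  have : (0:ℝ) < n := by exact_mod_cast hn
  unfold GG; positivity

lemma FF_nonneg (n : ℕ) : 0 ≤ FF n := by
  rcases Nat.eq_zero_or_pos n with h | h
  · simp [FF, h]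
  · exact (FF_pos h).le

lemma GG_nonneg (n : ℕ) : 0 ≤ GG n := by
  rcases Nat.eq_zero_or_pos n with h | h
  · simp [GG, h]
  · exact (GG_pos h).le

lemma FF_anti {m n : ℕ} (hm : 0 < m) (h : m ≤ n) : FF n ≤ FF m := by
  have h1 := one_le_onelog hm
  have h2 := one_le_onelog (hm.trans_le h)
  have hmr : (0:ℝ) < m := by exact_mod_cast hm
  have hc : (m:ℝ) ≤ n := by exact_mod_cast h
  have hl : Real.log m ≤ Real.log n := Real.log_le_log (by exact_mod_cast hm) hc
  unfold FF
  apply one_div_le_one_div_of_le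
  · positivity
  · exact mul_le_mul hc (pow_le_pow_left₀ (by linarith) (by linarith) 2)
      (by positivity) (by linarith)

lemma GG_anti {m n : ℕ} (hm : 0 < m) (h : m ≤ n) : GG n ≤ GG m := by
  have h1 := one_le_onelog hm
  have hmr : (0:ℝ) < m := by exact_mod_cast hm
  have hc : (m:ℝ) ≤ n := by exact_mod_cast h
  have hl : Real.log m ≤ Real.log n := Real.log_le_log (by exact_mod_cast hm) hc
  unfold GG
  apply one_div_le_one_div_of_le
  · positivity
  · exact mul_le_mul hc (by linarith) (by linarith) (by linarith)

lemma FF_summable : Summable FF := by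
  rw [← summable_condensed_iff_of_nonneg FF_nonneg (fun m n hm h => FF_anti hm h)]
  have hlog2 := Real.log_two_gt_d9
  have hlog2' := Real.log_two_lt_d9
  have key : ∀ n : ℕ, (2:ℝ) ^ n * FF (2 ^ n)
      ≤ 1 / ((n:ℝ) + 1) ^ 2 * (1 / Real.log 2 ^ 2) := by
    intro n
    unfold FF
    push_cast
    rw [Real.log_pow]
    have h2 : (0:ℝ) < 2 ^ n := by positivity
    have hd : ((n:ℝ) + 1) * Real.log 2 ≤ 1 + n * Real.log 2 := by nlinarith
    have hdp : (0:ℝ) < ((n:ℝ) + 1) * Real.log 2 := by positivity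
    rw [one_div_mul_one_div, ← mul_pow]
    calc (2:ℝ) ^ n * (1 / (2 ^ n * (1 + n * Real.log 2) ^ 2))
        = 1 / (1 + n * Real.log 2) ^ 2 := by
          field_simp
      _ ≤ 1 / (((n:ℝ) + 1) * Real.log 2) ^ 2 :=
          one_div_le_one_div_of_le (by positivity) (pow_le_pow_left₀ hdp.le hd 2)
  refine Summable.of_nonneg_of_le (fun n => ?_) key ?_
  · have := FF_nonneg (2^n)
    positivity
  · apply Summable.mul_right
    have : Summable (fun n : ℕ => 1 / ((n:ℝ)) ^ 2) :=
      Real.summable_one_div_nat_pow.mpr one_lt_two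
    have h2 := (summable_nat_add_iff 1).mpr this
    refine h2.congr fun n => ?_
    push_cast
    ring

lemma GG_not_summable : ¬ Summable GG := by
  intro h
  have hcond := (summable_condensed_iff_of_nonneg GG_nonneg
    (fun m n hm h => GG_anti hm h)).mpr h
  have hlog2' := Real.log_two_lt_d9
  have hlog2 := Real.log_two_gt_d9
  have key : ∀ n : ℕ, 1 / ((n:ℝ) + 1) ≤ (2:ℝ) ^ n * GG (2 ^ n) := by
    intro n
    unfold GG
    push_cast
    rw [Real.log_pow]
    have h2 : (0:ℝ) < 2 ^ n := by positivity
    calc 1 / ((n:ℝ) + 1)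
        ≤ 1 / (1 + n * Real.log 2) := by
          apply one_div_le_one_div_of_le
          · nlinarith
          · nlinarith
      _ = (2:ℝ) ^ n * (1 / (2 ^ n * (1 + n * Real.log 2))) := by
          field_simp
  have hsum : Summable (fun n : ℕ => 1 / ((n:ℝ) + 1)) :=
    Summable.of_nonneg_of_le (fun n => by positivity) key hcond
  have : Summable (fun n : ℕ => 1 / ((n:ℝ))) := by
    rw [← summable_nat_add_iff 1]
    exact hsum.congr fun n => by push_cast; ring
  exact Real.not_summable_one_div_natCast this

lemma exp15_le : Real.exp 15 ≤ 10000000 := by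
  have h : Real.exp 15 = Real.exp 1 ^ (15:ℕ) := by
    rw [← Real.exp_nat_mul]; norm_num
  rw [h]
  calc Real.exp 1 ^ (15:ℕ) ≤ 2.7182818286 ^ (15:ℕ) :=
        pow_le_pow_left₀ (Real.exp_pos 1).le Real.exp_one_lt_d9.le 15
    _ ≤ 10000000 := by norm_num

lemma le_exp7 : (648:ℝ) ≤ Real.exp 7 := by
  have h : Real.exp 7 = Real.exp 1 ^ (7:ℕ) := by
    rw [← Real.exp_nat_mul]; norm_num
  rw [h]
  calc (648:ℝ) ≤ 2.7182818283 ^ (7:ℕ) := by norm_num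
    _ ≤ Real.exp 1 ^ (7:ℕ) :=
        pow_le_pow_left₀ (by norm_num) Real.exp_one_gt_d9.le 7

lemma le_exp17 : (20000000:ℝ) ≤ Real.exp 17 := by
  have h : Real.exp 17 = Real.exp 1 ^ (17:ℕ) := by
    rw [← Real.exp_nat_mul]; norm_num
  rw [h]
  calc (20000000:ℝ) ≤ 2.7182818283 ^ (17:ℕ) := by norm_num
    _ ≤ Real.exp 1 ^ (17:ℕ) :=
        pow_le_pow_left₀ (by norm_num) Real.exp_one_gt_d9.le 17

/-- There exists a strictly positive, decreasing sequence `(a n) ⊆ (0, 10⁻³)` with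
`Σ aₙ² = 1` and `Σ aₙ² log(1/aₙ) = ∞`. -/
theorem exists_sequence_sq_summable_log_not :
    ∃ a : ℕ → ℝ, (∀ n, 0 < a n) ∧ (∀ n, a n < 1 / 1000) ∧ Antitone a ∧
      (∑' n, (a n) ^ 2) = 1 ∧
      ¬ Summable (fun n => (a n) ^ 2 * Real.log (1 / a n)) := by
  set f : ℕ → ℝ := fun n => FF (n + 10000000) with hf
  have hfs : Summable f := (summable_nat_add_iff 10000000).mpr FF_summable
  have hfpos : ∀ n, 0 < f n := fun n => FF_pos (by omega)
  set S : ℝ := ∑' n, f n with hSdef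
  have hS : 0 < S := Summable.tsum_pos hfs (fun n => (hfpos n).le) 0 (hfpos 0)
  -- numeric log bounds
  have hL15 : ∀ n : ℕ, (15:ℝ) ≤ Real.log ((n + 10000000 : ℕ) : ℝ) := by
    intro n
    rw [Real.le_log_iff_exp_le (by positivity)]
    refine exp15_le.trans ?_
    push_cast; linarith [Nat.cast_nonneg (α := ℝ) n]
  have hL17 : Real.log ((10000000 + 10000000 : ℕ) : ℝ) ≤ 17 := by
    rw [Real.log_le_iff_le_exp (by positivity)]
    refine le_trans ?_ le_exp17
    norm_num
  -- lower bound on S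
  have hfN : (1:ℝ) / 6480000000 ≤ f 10000000 := by
    show (1:ℝ) / 6480000000 ≤ FF (10000000 + 10000000)
    unfold FF
    apply one_div_le_one_div_of_le
    · have := hL15 10000000
      have h1 : (1:ℝ) ≤ 1 + Real.log ((10000000 + 10000000 : ℕ) : ℝ) := by linarith
      positivity
    · have h2 := hL17
      have h3 := hL15 10000000
      have hc : ((10000000 + 10000000 : ℕ) : ℝ) = 20000000 := by norm_num
      rw [hc] at h2 h3 ⊢
      nlinarith
  have hSlb : (1:ℝ) / 648 ≤ S := by
    have hle : ∀ i ∈ Finset.range 10000000, f 10000000 ≤ f i := by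
      intro i hi
      exact FF_anti (by omega) (by simp at hi; omega)
    have h1 := Finset.card_nsmul_le_sum (Finset.range 10000000) f (f 10000000) hle
    rw [Finset.card_range, nsmul_eq_mul] at h1
    have h2 : ∑ i ∈ Finset.range 10000000, f i ≤ S :=
      Summable.sum_le_tsum _ (fun i _ => (hfpos i).le) hfs
    calc (1:ℝ)/648 = 10000000 * (1 / 6480000000) := by norm_num
      _ ≤ 10000000 * f 10000000 := by
          have : (0:ℝ) ≤ 10000000 := by norm_num
          nlinarith [hfN]
      _ ≤ S := h1.trans h2
  have hlogS : (-7:ℝ) ≤ Real.log S := by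
    rw [Real.le_log_iff_exp_le hS]
    calc Real.exp (-7) = (Real.exp 7)⁻¹ := Real.exp_neg 7
      _ ≤ (648:ℝ)⁻¹ := by
          apply inv_anti₀ (by norm_num) le_exp7
      _ ≤ S := by rw [← one_div]; exact hSlb
  -- the sequence
  refine ⟨fun n => Real.sqrt (f n / S), fun n => ?_, ?_, ?_, ?_, ?_⟩
  · exact Real.sqrt_pos.mpr (div_pos (hfpos n) hS)
  · -- bound by 1/1000
    intro n
    have hmono : Real.sqrt (f n / S) ≤ Real.sqrt (f 0 / S) := by
      apply Real.sqrt_le_sqrt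
      gcongr
      exact FF_anti (by omega) (by omega)
    refine lt_of_le_of_lt hmono ?_
    rw [Real.sqrt_lt' (by norm_num : (0:ℝ) < 1/1000)]
    have h0 : f 0 ≤ 1 / 2560000000 := by
      show FF (0 + 10000000) ≤ _
      unfold FF
      apply one_div_le_one_div_of_le (by norm_num)
      have h3 := hL15 0
      have hc : ((0 + 10000000 : ℕ) : ℝ) = 10000000 := by norm_num
      rw [hc] at h3 ⊢
      nlinarith
    calc f 0 / S ≤ (1/2560000000) / (1/648) :=
          div_le_div₀ (by norm_num) h0 (by norm_num) hSlb
      _ < (1/1000)^2 := by norm_num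
  · -- Antitone
    intro m n h
    apply Real.sqrt_le_sqrt
    gcongr
    exact FF_anti (by omega) (by omega)
  · -- tsum = 1
    have : ∀ n : ℕ, Real.sqrt (f n / S) ^ 2 = f n / S := fun n =>
      Real.sq_sqrt (div_pos (hfpos n) hS).le
    calc (∑' n, Real.sqrt (f n / S) ^ 2) = ∑' n, f n / S := by
          exact tsum_congr this
      _ = S / S := by rw [tsum_div_const]
      _ = 1 := div_self hS.ne'
  · -- not summable
    intro hsum
    set c : ℝ := 4 * S with hc
    have hcpos : 0 < c := by positivity
    have hterm : ∀ n : ℕ, GG (n + 10000000) / c ≤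
        Real.sqrt (f n / S) ^ 2 * Real.log (1 / Real.sqrt (f n / S)) := by
      intro n
      have hfd : 0 < f n / S := div_pos (hfpos n) hS
      have hsq : Real.sqrt (f n / S) ^ 2 = f n / S := Real.sq_sqrt hfd.le
      set M : ℝ := ((n + 10000000 : ℕ) : ℝ) with hM
      have hMpos : (0:ℝ) < M := by positivity
      have hL := hL15 n
      rw [← hM] at hL
      have hM1 : (1:ℝ) ≤ M := by
        rw [hM]; exact_mod_cast Nat.one_le_iff_ne_zero.mpr (by omega)
      have h1L : (1:ℝ) ≤ 1 + Real.log M := by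
        have := Real.log_nonneg hM1
        linarith
      have hne : (1 + Real.log M) ≠ 0 := ne_of_gt (by linarith)
      have hfn : f n = 1 / (M * (1 + Real.log M)^2) := rfl
      have hlogf : Real.log (f n) = -(Real.log M + 2 * Real.log (1 + Real.log M)) := by
        rw [hfn, one_div, Real.log_inv,
          Real.log_mul (ne_of_gt hMpos) (by positivity), Real.log_pow]
        push_cast
        ring
      have hlog1a : Real.log (1 / Real.sqrt (f n / S))
          = (Real.log S - Real.log (f n)) / 2 := by
        rw [one_div, Real.log_inv, Real.log_sqrt hfd.le,
          Real.log_div (hfpos n).ne' hS.ne']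
        ring
      have hlogge : (1 + Real.log M) / 4 ≤ Real.log (1 / Real.sqrt (f n / S)) := by
        rw [hlog1a, hlogf]
        have hnn : 0 ≤ Real.log (1 + Real.log M) := Real.log_nonneg h1L
        linarith
      have hGGf : GG (n + 10000000) = f n * (1 + Real.log M) := by
        rw [hfn]
        unfold GG
        rw [← hM]
        field_simp
      rw [hsq]
      calc GG (n + 10000000) / c = (f n / S) * ((1 + Real.log M) / 4) := by
            rw [hGGf, hc, div_mul_div_comm, mul_comm S 4]
        _ ≤ (f n / S) * Real.log (1 / Real.sqrt (f n / S)) :=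
            mul_le_mul_of_nonneg_left hlogge hfd.le
    have hsum2 : Summable (fun n => GG (n + 10000000)) := by
      refine Summable.of_nonneg_of_le (fun n => GG_nonneg _) (fun n => ?_) (hsum.mul_right c)
      exact (div_le_iff₀ hcpos).mp (hterm n)
    exact GG_not_summable ((summable_nat_add_iff 10000000).mp hsum2)
end

section
/- Let E be a doubling subset of a Hilbert space X with doubling constant N, and let F be a multiresolution family for E, i.e., F = { B(z, 2·2^{-k}) : k ∈ ℤ, z ∈ N_k } where (N_k) is a nested sequence of 2^{-k}-nets in E. Then for every bounded set Γ ⊆ X with diam(Γ) > 0, the sum over all balls B ∈ F satisfying B ∩ Γ ≠ ∅ and diam(B) > diam(Γ) of the quantity diam(Γ)²/diam(B) is at most C·diam(Γ), where C depends only on N. -/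
/-- `N` is a maximal `r`-separated subset (an `r`-net) of `E`: it is contained in `E`,
`r`-separated, and maximal (every point of `E` is within distance `< r` of `N`). -/
def IsNet {X : Type*} [MetricSpace X] (E N : Set X) (r : ℝ) : Prop :=
  N ⊆ E ∧ (∀ x ∈ N, ∀ y ∈ N, x ≠ y → r ≤ dist x y) ∧
    ∀ x ∈ E, ∃ y ∈ N, dist x y < r

/-- `E` is doubling with constant `N`: every ball (centered on `E`) meets `E` in a set that
can be covered by `N` balls of half the radius centered on `E`. -/
def DoublingSet {X : Type*} [MetricSpace X] (E : Set X) (N : ℕ) : Prop :=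
  ∀ x ∈ E, ∀ r : ℝ, 0 < r → ∃ S : Finset X, ↑S ⊆ E ∧ S.card ≤ N ∧
    E ∩ Metric.closedBall x r ⊆ ⋃ y ∈ S, Metric.closedBall y (r / 2)


open Metric Finset

lemma sep_card_le {X : Type*} [MetricSpace X] {E : Set X} {N : ℕ}
    (hE : DoublingSet E N) (m : ℕ) :
    ∀ (x : X), x ∈ E → ∀ r : ℝ, 0 < r → ∀ s : ℝ, 2 * (r / 2 ^ m) < s →
    ∀ S : Finset X, ↑S ⊆ E ∩ Metric.closedBall x r →
    (∀ a ∈ S, ∀ b ∈ S, a ≠ b → s ≤ dist a b) → S.card ≤ N ^ m := by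
  induction m with
  | zero =>
    intro x hx r hr s hs S hSsub hsep
    simp only [pow_zero, div_one] at hs
    refine Finset.card_le_one.mpr (fun a ha b hb => ?_) |>.trans (by simp)
    by_contra hab
    have h1 := (hSsub ha).2
    have h2 := (hSsub hb).2
    have := hsep a ha b hb hab
    have : dist a b ≤ 2 * r := by
      have := dist_triangle a x b
      rw [Metric.mem_closedBall] at h1 h2
      rw [dist_comm x b] at this
      linarith
    linarith [hsep a ha b hb hab]
  | succ m ih =>
    intro x hx r hr s hs S hSsub hsep
    classical
    obtain ⟨Sc, hScE, hSccard, hcover⟩ := hE x hx r hr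
    have hsub : S ⊆ Sc.biUnion (fun y => S.filter (fun a => a ∈ Metric.closedBall y (r / 2))) := by
      intro a ha
      have := hcover (hSsub ha)
      simp only [Set.mem_iUnion] at this
      obtain ⟨y, hy, hay⟩ := this
      exact Finset.mem_biUnion.mpr ⟨y, hy, Finset.mem_filter.mpr ⟨ha, hay⟩⟩
    calc S.card ≤ (Sc.biUnion _).card := Finset.card_le_card hsub
      _ ≤ ∑ y ∈ Sc, (S.filter (fun a => a ∈ Metric.closedBall y (r / 2))).card :=
          Finset.card_biUnion_le
      _ ≤ ∑ _y ∈ Sc, N ^ m := by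
          refine Finset.sum_le_sum (fun y hy => ?_)
          refine ih y (hScE hy) (r / 2) (by positivity) s ?_ _ ?_ ?_
          · have : r / 2 / 2 ^ m = r / 2 ^ (m + 1) := by ring
            rw [this]; exact hs
          · intro a ha
            rw [Finset.coe_filter] at ha
            exact ⟨(hSsub ha.1).1, ha.2⟩
          · intro a ha b hb hab
            exact hsep a (Finset.mem_of_mem_filter a ha) b (Finset.mem_of_mem_filter b hb) hab
      _ ≤ N ^ (m + 1) := by
          rw [Finset.sum_const, smul_eq_mul, pow_succ, mul_comm (N ^ m) N]
          exact Nat.mul_le_mul_right _ hSccard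

lemma sum_zpow_le {K : Finset ℤ} {M : ℝ} (hM : 0 ≤ M) (h : ∀ k ∈ K, (2:ℝ) ^ k ≤ M) :
    ∑ k ∈ K, (2:ℝ) ^ k ≤ 2 * M := by
  rcases K.eq_empty_or_nonempty with rfl | hne
  · simp; positivity
  set k0 := K.max' hne with hk0
  have hle : ∀ k ∈ K, k ≤ k0 := fun k hk => K.le_max' k hk
  have heq : ∀ k ∈ K, (2:ℝ) ^ k = (2:ℝ) ^ k0 * (1/2 : ℝ) ^ (k0 - k).toNat := by
    intro k hk
    have hnn : 0 ≤ k0 - k := by linarith [hle k hk]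
    have : ((k0 - k).toNat : ℤ) = k0 - k := Int.toNat_of_nonneg hnn
    rw [one_div, inv_pow, ← zpow_natCast (2:ℝ), this, ← zpow_neg,
      ← zpow_add₀ (by norm_num : (2:ℝ) ≠ 0)]
    ring_nf
  rw [Finset.sum_congr rfl heq, ← Finset.mul_sum]
  have hinj : Set.InjOn (fun k => (k0 - k).toNat) K := by
    intro a ha b hb hab
    have h1 : ((k0 - a).toNat : ℤ) = k0 - a := Int.toNat_of_nonneg (by linarith [hle a ha])
    have h2 : ((k0 - b).toNat : ℤ) = k0 - b := Int.toNat_of_nonneg (by linarith [hle b hb])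
    simp only at hab
    omega
  have hsum : ∑ k ∈ K, (1/2 : ℝ) ^ (k0 - k).toNat
      = ∑ j ∈ K.image (fun k => (k0 - k).toNat), (1/2 : ℝ) ^ j :=
    (Finset.sum_image (fun a ha b hb => hinj ha hb)).symm
  have hts : ∑ j ∈ K.image (fun k => (k0 - k).toNat), (1/2 : ℝ) ^ j ≤ 2 := by
    have := Summable.sum_le_tsum (K.image (fun k => (k0 - k).toNat))
      (fun i _ => by positivity) summable_geometric_two
    rw [tsum_geometric_two] at this
    exact this
  have h2k0 : (2:ℝ) ^ k0 ≤ M := h k0 (K.max'_mem hne)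
  have hpos : (0:ℝ) < (2:ℝ) ^ k0 := by positivity
  calc (2:ℝ) ^ k0 * ∑ k ∈ K, (1/2:ℝ) ^ (k0 - k).toNat
      ≤ (2:ℝ) ^ k0 * 2 := by rw [hsum]; exact mul_le_mul_of_nonneg_left hts hpos.le
    _ ≤ 2 * M := by nlinarith

/-- For a doubling set `E` with multiresolution family `{B(z, 2·2⁻ᵏ) : z ∈ Nk k}` and any
bounded set `Γ` of positive diameter, the sum of `diam(Γ)²/diam(B)` over the balls `B` of the
family meeting `Γ` and with `diam B > diam Γ` is at most `C · diam Γ`, with `C = C(N)`.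

The proof below uses the helper lemmas `sep_card_le` and `sum_zpow_le`. -/
theorem large_balls_sum_bound (N : ℕ) :
    ∃ C : ℝ, 0 < C ∧
      ∀ (X : Type) [NormedAddCommGroup X] [InnerProductSpace ℝ X] [CompleteSpace X]
        (E : Set X) (Nk : ℤ → Set X) (Γ : Set X),
        DoublingSet E N →
        (∀ k : ℤ, IsNet E (Nk k) ((2 : ℝ) ^ (-k))) →
        (∀ k : ℤ, Nk k ⊆ Nk (k + 1)) →
        Bornology.IsBounded Γ → 0 < Metric.diam Γ →
        ∀ T : Finset (ℤ × X),
          (∀ p ∈ T, p.2 ∈ Nk p.1 ∧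
            (Metric.closedBall p.2 (2 * (2 : ℝ) ^ (-p.1)) ∩ Γ).Nonempty ∧
            Metric.diam Γ < 4 * (2 : ℝ) ^ (-p.1)) →
          ∑ p ∈ T, (Metric.diam Γ) ^ 2 / (4 * (2 : ℝ) ^ (-p.1)) ≤ C * Metric.diam Γ := by
  classical
  refine ⟨2 * (N:ℝ) ^ 5 + 1, by positivity, ?_⟩
  intro X _ _ _ E Nk Γ hE hnet _hnested hΓb hΓd T hT
  set d := Metric.diam Γ with hd
  set K := T.image Prod.fst with hK
  have hsum : ∑ p ∈ T, d ^ 2 / (4 * (2:ℝ) ^ (-p.1))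
      = ∑ k ∈ K, ((T.filter (fun p => p.1 = k)).card : ℝ) * (d ^ 2 / (4 * (2:ℝ) ^ (-k))) := by
    rw [hK, Finset.sum_comp (fun k : ℤ => d ^ 2 / (4 * (2:ℝ) ^ (-k))) Prod.fst]
    simp [nsmul_eq_mul]
  have hfiber : ∀ k ∈ K, ((T.filter (fun p => p.1 = k)).card) ≤ N ^ 5 := by
    intro k hk
    obtain ⟨p0, hp0T, hp0k⟩ := Finset.mem_image.mp hk
    have hz0 : p0.2 ∈ Nk k := by rw [← hp0k]; exact (hT p0 hp0T).1
    have hz0E : p0.2 ∈ E := (hnet k).1 hz0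
    have hdlt : d < 4 * (2:ℝ) ^ (-k) := by
      have := (hT p0 hp0T).2.2; rwa [hp0k] at this
    set t := (2:ℝ) ^ (-k) with ht
    have htpos : 0 < t := by positivity
    set S := (T.filter (fun p => p.1 = k)).image Prod.snd with hS
    have hmem : ∀ z ∈ S, z ∈ Nk k ∧
        (Metric.closedBall z (2 * t) ∩ Γ).Nonempty := by
      intro z hz
      obtain ⟨p, hp, hpz⟩ := Finset.mem_image.mp hz
      obtain ⟨hpT, hpk⟩ := Finset.mem_filter.mp hp
      have := hT p hpT
      rw [hpk] at this
      rw [← hpz]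
      exact ⟨this.1, this.2.1⟩
    have hcard : (T.filter (fun p => p.1 = k)).card = S.card := by
      rw [hS]
      refine (Finset.card_image_of_injOn ?_).symm
      intro p hp q hq hpq
      have h1 := (Finset.mem_filter.mp hp).2
      have h2 := (Finset.mem_filter.mp hq).2
      exact Prod.ext (h1.trans h2.symm) hpq
    rw [hcard]
    have hdist : ∀ z ∈ S, dist z p0.2 ≤ 8 * t := by
      intro z hz
      obtain ⟨γ, hγb, hγΓ⟩ := (hmem z hz).2
      have hz0S : p0.2 ∈ S := by
        refine Finset.mem_image.mpr ⟨p0, Finset.mem_filter.mpr ⟨hp0T, hp0k⟩, rfl⟩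
      obtain ⟨γ0, hγ0b, hγ0Γ⟩ := (hmem p0.2 hz0S).2
      have h1 : dist z γ ≤ 2 * t := by
        rw [dist_comm]; exact Metric.mem_closedBall.mp hγb
      have h2 : dist p0.2 γ0 ≤ 2 * t := by
        rw [dist_comm]; exact Metric.mem_closedBall.mp hγ0b
      have h3 : dist γ γ0 ≤ d := Metric.dist_le_diam_of_mem hΓb hγΓ hγ0Γ
      calc dist z p0.2 ≤ dist z γ + dist γ γ0 + dist γ0 p0.2 := dist_triangle4 z γ γ0 p0.2
        _ ≤ 2 * t + d + 2 * t := by rw [dist_comm γ0 p0.2]; linarith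
        _ ≤ 8 * t := by linarith
    refine sep_card_le hE 5 p0.2 hz0E (8 * t) (by positivity) t ?_ S ?_ ?_
    · norm_num; linarith
    · intro z hz
      exact ⟨(hnet k).1 (hmem z hz).1, Metric.mem_closedBall.mpr (hdist z hz)⟩
    · intro a ha b hb hab
      exact (hnet k).2.1 a (hmem a ha).1 b (hmem b hb).1 hab
  have hgk : ∀ k : ℤ, d ^ 2 / (4 * (2:ℝ) ^ (-k)) = d ^ 2 / 4 * (2:ℝ) ^ k := by
    intro k
    have h2 : ((2:ℝ) ^ k) ≠ 0 := by positivity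
    rw [zpow_neg]
    field_simp
  have hKbound : ∑ k ∈ K, (2:ℝ) ^ k ≤ 2 * (4 / d) := by
    refine sum_zpow_le (by positivity) ?_
    intro k hk
    obtain ⟨p, hp, hpk⟩ := Finset.mem_image.mp hk
    have := (hT p hp).2.2
    rw [hpk, zpow_neg] at this
    have hp2 : (0:ℝ) < (2:ℝ) ^ k := by positivity
    have hinv : ((2:ℝ) ^ k)⁻¹ * (2:ℝ) ^ k = 1 := inv_mul_cancel₀ (ne_of_gt hp2)
    rw [le_div_iff₀ hΓd]
    nlinarith
  have hgpos : ∀ k : ℤ, 0 ≤ d ^ 2 / (4 * (2:ℝ) ^ (-k)) := fun k => by positivity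
  calc ∑ p ∈ T, d ^ 2 / (4 * (2:ℝ) ^ (-p.1))
      = ∑ k ∈ K, ((T.filter (fun p => p.1 = k)).card : ℝ) * (d ^ 2 / (4 * (2:ℝ) ^ (-k))) := hsum
    _ ≤ ∑ k ∈ K, (N:ℝ) ^ 5 * (d ^ 2 / (4 * (2:ℝ) ^ (-k))) := by
        refine Finset.sum_le_sum fun k hk => mul_le_mul_of_nonneg_right ?_ (hgpos k)
        have := hfiber k hk
        exact_mod_cast Nat.cast_le.mpr (by exact_mod_cast this)
    _ = (N:ℝ) ^ 5 * (d ^ 2 / 4) * ∑ k ∈ K, (2:ℝ) ^ k := by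
        rw [Finset.mul_sum]
        refine Finset.sum_congr rfl fun k _ => by rw [hgk k]; ring
    _ ≤ (N:ℝ) ^ 5 * (d ^ 2 / 4) * (2 * (4 / d)) := by
        refine mul_le_mul_of_nonneg_left hKbound (by positivity)
    _ = 2 * (N:ℝ) ^ 5 * d := by field_simp
    _ ≤ (2 * (N:ℝ) ^ 5 + 1) * d := by nlinarith
end

section
/- Let X be a Hilbert space, E ⊆ X a set that badly fits d-planes with parameter ε₀, and f : X → ℝ a Lipschitz function. Then the graph G = {(x, f(x)) : x ∈ E}, regarded as a subset of the Hilbert space X × ℝ (with the product inner product), badly fits d-planes with some parameter ε₀' > 0 depending only on ε₀ and the Lipschitz constant of f. -/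
set_option maxHeartbeats 1600000

open Metric

/-- `E` badly fits `d`-planes with parameter `ε₀`. -/
def BadlyFits {X : Type*} [NormedAddCommGroup X] [InnerProductSpace ℝ X]
    (E : Set X) (d : ℕ) (ε₀ : ℝ) : Prop :=
  ∀ V : AffineSubspace ℝ X, Module.finrank ℝ V.direction = d →
    ∀ (x : X) (r : ℝ), 0 < r →
      0 < Metric.diam ((V : Set X) ∩ Metric.closedBall x r) →
      ¬ ((V : Set X) ∩ Metric.closedBall x r ⊆
         {y | ∃ e ∈ E, dist y e ≤ ε₀ * Metric.diam ((V : Set X) ∩ Metric.closedBall x r)})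

lemma exists_deep_point {F : Type*} [NormedAddCommGroup F] [InnerProductSpace ℝ F]
    (V : AffineSubspace ℝ F) (p : F) (r : ℝ)
    (hD : 0 < Metric.diam ((V : Set F) ∩ Metric.closedBall p r)) :
    ∃ m₀ : F, ∀ w ∈ V.direction,
      ‖w‖ ≤ Metric.diam ((V : Set F) ∩ Metric.closedBall p r) / 8 →
      m₀ + w ∈ (V : Set F) ∩ Metric.closedBall p r := by
  set S := (V : Set F) ∩ Metric.closedBall p r with hSdef
  set D := Metric.diam S with hDdef
  have hS : S.Nonempty := by
    rcases S.eq_empty_or_nonempty with h | h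
    · exfalso
      have : D = 0 := by rw [hDdef, h, Metric.diam_empty]
      linarith
    · exact h
  obtain ⟨y₀, hy₀V, hy₀B⟩ := hS
  have hVne : (V : Set F).Nonempty := ⟨y₀, hy₀V⟩
  set d₀ := Metric.infDist p (V : Set F) with hd₀def
  have hd₀0 : 0 ≤ d₀ := Metric.infDist_nonneg
  have hd₀r : d₀ ≤ r := by
    refine le_trans (Metric.infDist_le_dist_of_mem hy₀V) ?_
    rw [dist_comm]
    exact Metric.mem_closedBall.mp hy₀B
  have hr0 : 0 ≤ r := le_trans hd₀0 hd₀r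
  have low : ∀ m ∈ (V : Set F), ∀ w ∈ V.direction, ∀ c : ℝ,
      d₀ ^ 2 ≤ ‖(m - p) + c • w‖ ^ 2 := by
    intro m hm w hw c
    have hmem : m + c • w ∈ (V : Set F) := by
      have := AffineSubspace.vadd_mem_of_mem_direction (V.direction.smul_mem c hw) hm
      simpa [add_comm] using this
    have h1 : d₀ ≤ dist p (m + c • w) := Metric.infDist_le_dist_of_mem hmem
    have h2 : dist p (m + c • w) = ‖(m - p) + c • w‖ := by
      rw [dist_comm, dist_eq_norm]
      congr 1
      abel
    rw [h2] at h1
    nlinarith [norm_nonneg ((m - p) + c • w)]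
  have expand : ∀ (m w : F) (c : ℝ), ‖(m - p) + c • w‖ ^ 2
      = ‖m - p‖ ^ 2 + 2 * c * (inner ℝ (m - p) w : ℝ) + c ^ 2 * ‖w‖ ^ 2 := by
    intro m w c
    rw [norm_add_sq_real, real_inner_smul_right, norm_smul]
    rw [mul_pow]
    simp [sq_abs]
    ring
  set ρ := Real.sqrt (r ^ 2 - d₀ ^ 2) with hρdef
  have hρ0 : 0 ≤ ρ := Real.sqrt_nonneg _
  have hρsq : ρ ^ 2 = r ^ 2 - d₀ ^ 2 := Real.sq_sqrt (by nlinarith)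
  have claim1 : D ≤ 3 * ρ := by
    refine le_of_forall_pos_le_add (fun ε hε => ?_)
    set η := min 1 ((ε / 32) ^ 2 / (2 * r + 1)) with hηdef
    have hη0 : 0 < η := lt_min one_pos (by positivity)
    have hη1 : η ≤ 1 := min_le_left _ _
    have hη2 : η ≤ (ε / 32) ^ 2 / (2 * r + 1) := min_le_right _ _
    obtain ⟨m, hmV, hmdist⟩ := (Metric.infDist_lt_iff hVne).mp
      (show Metric.infDist p (V : Set F) < d₀ + η by rw [← hd₀def]; linarith)
    have hA : ‖m - p‖ < d₀ + η := by
      rw [show ‖m - p‖ = dist p m by rw [dist_comm, dist_eq_norm]]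
      exact hmdist
    have hA0 : d₀ ≤ ‖m - p‖ := by
      rw [show ‖m - p‖ = dist p m by rw [dist_comm, dist_eq_norm]]
      exact Metric.infDist_le_dist_of_mem hmV
    have h2r : η * (2 * d₀ + η) ≤ (ε / 32) ^ 2 := by
      have ha : 2 * d₀ + η ≤ 2 * r + 1 := by linarith
      have hb : η * (2 * r + 1) ≤ (ε / 32) ^ 2 := by
        rw [le_div_iff₀ (by positivity)] at hη2
        linarith
      nlinarith
    have hwbound : ∀ y ∈ S, ‖y - m‖ ≤ (3 / 2) * ρ + ε / 8 := by
      intro y hy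
      set w := y - m with hwdef
      have hwdir : w ∈ V.direction := by
        have := AffineSubspace.vsub_mem_direction hy.1 hmV
        simpa using this
      have hlow := low m hmV w hwdir (1 / 2)
      rw [expand] at hlow
      have hyB : ‖(m - p) + (1 : ℝ) • w‖ ≤ r := by
        have he : (m - p) + (1 : ℝ) • w = y - p := by rw [one_smul, hwdef]; abel
        rw [he, ← dist_eq_norm]
        exact Metric.mem_closedBall.mp hy.2
      have hup2 : ‖m - p‖ ^ 2 + 2 * (inner ℝ (m - p) w : ℝ) + ‖w‖ ^ 2 ≤ r ^ 2 := by
        have hex := expand m w 1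
        nlinarith [norm_nonneg ((m - p) + (1 : ℝ) • w)]
      have hC2 : ‖w‖ ^ 2 ≤ ((3 / 2) * ρ + ε / 8) ^ 2 := by
        nlinarith [mul_pos (sub_pos.mpr hA) (show (0:ℝ) < d₀ + η + ‖m - p‖ by positivity),
          hε.le, sq_nonneg ε, sq_nonneg (‖w‖)]
      exact (pow_le_pow_iff_left₀ (norm_nonneg w) (by positivity) two_ne_zero).mp hC2
    have : D ≤ 3 * ρ + ε / 2 := by
      refine Metric.diam_le_of_forall_dist_le (by positivity) (fun a ha b hb => ?_)
      have h1 := hwbound a ha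
      have h2 := hwbound b hb
      have : dist a b ≤ ‖a - m‖ + ‖b - m‖ := by
        rw [dist_eq_norm, show a - b = (a - m) - (b - m) by abel]
        exact norm_sub_le _ _
      linarith
    linarith
  have hρpos : 0 < ρ := by nlinarith
  set η := min 1 (ρ ^ 2 / (4 * (2 * d₀ + 1))) with hηdef
  have hη0 : 0 < η := lt_min one_pos (by positivity)
  have hη1 : η ≤ 1 := min_le_left _ _
  have hη2 : η ≤ ρ ^ 2 / (4 * (2 * d₀ + 1)) := min_le_right _ _
  obtain ⟨m, hmV, hmdist⟩ := (Metric.infDist_lt_iff hVne).mp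
    (show Metric.infDist p (V : Set F) < d₀ + η by rw [← hd₀def]; linarith)
  have hA : ‖m - p‖ < d₀ + η := by
    rw [show ‖m - p‖ = dist p m by rw [dist_comm, dist_eq_norm]]
    exact hmdist
  have hA0 : d₀ ≤ ‖m - p‖ := by
    rw [show ‖m - p‖ = dist p m by rw [dist_comm, dist_eq_norm]]
    exact Metric.infDist_le_dist_of_mem hmV
  refine ⟨m, fun w hw hwn => ?_⟩
  constructor
  · have := AffineSubspace.vadd_mem_of_mem_direction hw hmV
    simpa [add_comm] using this
  · rw [Metric.mem_closedBall, dist_eq_norm,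
      show m + w - p = (m - p) + (1 : ℝ) • w by rw [one_smul]; abel]
    have hlow := low m hmV w hw (-1)
    rw [expand] at hlow
    norm_num at hlow
    have hAsq : ‖m - p‖ ^ 2 ≤ d₀ ^ 2 + η * (2 * d₀ + η) := by nlinarith
    have hB : 2 * (inner ℝ (m - p) w : ℝ) ≤ η * (2 * d₀ + η) + ‖w‖ ^ 2 := by linarith
    have hηd : 2 * (η * (2 * d₀ + η)) ≤ ρ ^ 2 / 2 := by
      have ha : η * (2 * d₀ + η) ≤ η * (2 * d₀ + 1) := by nlinarith
      rw [le_div_iff₀ (by positivity)] at hη2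
      nlinarith
    have hwρ : ‖w‖ ≤ 3 * ρ / 8 := by linarith
    have hC2 : ‖w‖ ^ 2 ≤ 9 * ρ ^ 2 / 64 := by nlinarith [norm_nonneg w]
    have hfin : ‖(m - p) + (1 : ℝ) • w‖ ^ 2 ≤ r ^ 2 := by
      rw [expand]
      norm_num
      linarith [sq_nonneg ρ]
    exact (pow_le_pow_iff_left₀ (norm_nonneg _) hr0 two_ne_zero).mp hfin

/-- If `E ⊆ X` badly fits `d`-planes with parameter `ε₀` and `f : X → ℝ` is `K`-Lipschitz,
then the graph of `f` over `E`, inside the Hilbert space `X ×₂ ℝ`, badly fits `d`-planes with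
a parameter `ε₀'` depending only on `ε₀` and `K`. -/
theorem graph_badlyFits (ε₀ : ℝ) (hε₀ : 0 < ε₀) (K : NNReal) :
    ∃ ε₀' : ℝ, 0 < ε₀' ∧
      ∀ (X : Type) [NormedAddCommGroup X] [InnerProductSpace ℝ X] [CompleteSpace X]
        (d : ℕ) (E : Set X) (f : X → ℝ),
        BadlyFits E d ε₀ → LipschitzWith K f →
        BadlyFits
          ((fun x : X => (WithLp.equiv 2 (X × ℝ)).symm (x, f x)) '' E) d ε₀' := by
  have hK0 : (0:ℝ) ≤ (K:ℝ) := K.coe_nonneg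
  refine ⟨min (ε₀ / (8 * ((K:ℝ) + 2))) (1 / (13 * ((K:ℝ) + 1) ^ 2)),
    lt_min (by positivity) (by positivity), ?_⟩
  intro X _ _ _ d E f hE hf V hV p r hr hD hsub
  set Kr := (K:ℝ) with hKr
  set ε' := min (ε₀ / (8 * (Kr + 2))) (1 / (13 * (Kr + 1) ^ 2)) with hε'def
  have hε'pos : 0 < ε' := lt_min (by positivity) (by positivity)
  set S := (V : Set (WithLp 2 (X × ℝ))) ∩ Metric.closedBall p r with hSdef
  set D := Metric.diam S with hDdef
  obtain ⟨m₀, hm₀⟩ := exists_deep_point V p r hD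
  have hm₀S : m₀ ∈ S := by
    have := hm₀ 0 (Submodule.zero_mem _) (by rw [norm_zero]; linarith)
    simpa [hSdef] using this
  -- component norm facts
  have hcomp1 : ∀ u : WithLp 2 (X × ℝ), ‖u.fst‖ ≤ ‖u‖ ∧ |u.snd| ≤ ‖u‖ := by
    intro u
    have h := WithLp.prod_norm_sq_eq_of_L2 u
    constructor
    · nlinarith [norm_nonneg u, norm_nonneg u.fst, norm_nonneg u.snd, sq_nonneg (‖u.snd‖)]
    · have : ‖u.snd‖ ≤ ‖u‖ := by nlinarith [norm_nonneg u, norm_nonneg u.fst, norm_nonneg u.snd]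
      simpa [Real.norm_eq_abs] using this
  by_cases hsteep : ∃ w ∈ V.direction, (Kr + 1) * ‖(w : WithLp 2 (X × ℝ)).fst‖ < |w.snd|
  · -- steep case: contradiction with Lipschitz bound
    obtain ⟨w, hwdir, hwsteep⟩ := hsteep
    have hw2pos : 0 < |w.snd| := lt_of_le_of_lt (by positivity) hwsteep
    have hwpos : 0 < ‖w‖ := lt_of_lt_of_le hw2pos (hcomp1 w).2
    set c := (D / 8) / ‖w‖ with hc
    have hcpos : 0 < c := by positivity
    set u := c • w with hu
    have hudir : u ∈ V.direction := Submodule.smul_mem _ _ hwdir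
    have hunorm : ‖u‖ = D / 8 := by
      rw [hu, norm_smul, Real.norm_eq_abs, abs_of_pos hcpos, hc]
      field_simp
    have hu1 : ‖u.fst‖ = c * ‖w.fst‖ := by
      rw [show u.fst = c • w.fst from rfl, norm_smul, Real.norm_eq_abs, abs_of_pos hcpos]
    have hu2 : |u.snd| = c * |w.snd| := by
      rw [show u.snd = c * w.snd from rfl, abs_mul, abs_of_pos hcpos]
    have husteep : (Kr + 1) * ‖u.fst‖ ≤ |u.snd| := by
      rw [hu1, hu2]
      nlinarith
    have h1 : m₀ + u ∈ S := hm₀ u hudir (le_of_eq hunorm)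
    have h2 : m₀ + -u ∈ S := hm₀ (-u) (Submodule.neg_mem _ hudir)
      (by rw [norm_neg]; exact le_of_eq hunorm)
    obtain ⟨ge₁, hge₁, hd1⟩ := hsub h1
    obtain ⟨e₁, he₁E, rfl⟩ := hge₁
    obtain ⟨ge₂, hge₂, hd2⟩ := hsub h2
    obtain ⟨e₂, he₂E, rfl⟩ := hge₂
    rw [dist_eq_norm] at hd1 hd2
    have c11 : ‖(m₀.fst + u.fst) - e₁‖ ≤ ε' * D := by
      have h := le_trans (hcomp1 _).1 hd1
      exact h
    have c12 : |(m₀.snd + u.snd) - f e₁| ≤ ε' * D := by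
      have h := le_trans (hcomp1 _).2 hd1
      exact h
    have c21 : ‖(m₀.fst + -u.fst) - e₂‖ ≤ ε' * D := by
      have h := le_trans (hcomp1 _).1 hd2
      exact h
    have c22 : |(m₀.snd + -u.snd) - f e₂| ≤ ε' * D := by
      have h := le_trans (hcomp1 _).2 hd2
      exact h
    have hdist12 : ‖e₁ - e₂‖ ≤ 2 * ‖u.fst‖ + 2 * (ε' * D) := by
      have h3 : e₁ - e₂ = -((m₀.fst + u.fst) - e₁) + (u.fst + u.fst) + ((m₀.fst + -u.fst) - e₂) := by abel
      rw [h3]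
      refine le_trans (norm_add₃_le) ?_
      rw [norm_neg]
      have : ‖u.fst + u.fst‖ ≤ 2 * ‖u.fst‖ := by
        refine le_trans (norm_add_le _ _) (by linarith)
      linarith
    have hf12 : 2 * |u.snd| - 2 * (ε' * D) ≤ |f e₁ - f e₂| := by
      have h3 : u.snd + u.snd = ((m₀.snd + u.snd) - f e₁) + (f e₁ - f e₂) + -((m₀.snd + -u.snd) - f e₂) := by
        ring
      have h4 : |u.snd + u.snd| ≤ ε' * D + |f e₁ - f e₂| + ε' * D := by
        rw [h3]
        refine le_trans (abs_add_three _ _ _) ?_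
        rw [abs_neg]
        linarith
      have h5 : |u.snd + u.snd| = 2 * |u.snd| := by
        rw [show u.snd + u.snd = 2 * u.snd by ring, abs_mul]
        norm_num
      linarith
    have hlip : |f e₁ - f e₂| ≤ Kr * ‖e₁ - e₂‖ := by
      have := hf.dist_le_mul e₁ e₂
      simpa [Real.dist_eq, dist_eq_norm] using this
    have hcombine : |u.snd| ≤ Kr * ‖u.fst‖ + (Kr + 1) * (ε' * D) := by
      nlinarith [hf12, hlip, hdist12, mul_le_mul_of_nonneg_left hdist12 hK0]
    have hq2 : |u.snd| ≤ (Kr + 1) ^ 2 * (ε' * D) := by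
      nlinarith [hcombine, mul_le_mul_of_nonneg_left husteep hK0, norm_nonneg u.fst,
        abs_nonneg u.snd]
    have hnormsq : ‖u.fst‖ ^ 2 + |u.snd| ^ 2 = (D / 8) ^ 2 := by
      have h := WithLp.prod_norm_sq_eq_of_L2 u
      rw [hunorm, Real.norm_eq_abs] at h
      exact h.symm
    have hε'2 : ε' ≤ 1 / (13 * (Kr + 1) ^ 2) := min_le_right _ _
    have hεD : (Kr + 1) ^ 2 * (ε' * D) ≤ D / 13 := by
      rw [le_div_iff₀ (by norm_num : (0:ℝ) < 13)]
      have h13 : 13 * (Kr + 1) ^ 2 > 0 := by positivity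
      rw [le_div_iff₀ h13] at hε'2
      nlinarith [hD.le]
    -- now: ‖u.fst‖ ≤ |u.snd| (since Kr+1 ≥ 1), so (D/8)^2 ≤ 2|u.snd|^2 ≤ 2 (D/13)^2, contradiction
    have habs : ‖u.fst‖ ≤ |u.snd| := le_trans (by nlinarith [norm_nonneg u.fst]) husteep
    have hu2D : |u.snd| ≤ D / 13 := le_trans hq2 hεD
    nlinarith [abs_nonneg u.snd, norm_nonneg u.fst, hD, mul_pos hD hD]
  · -- flat case: project to X and contradict BadlyFits of E
    push_neg at hsteep
    set L := Kr + 2 with hL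
    have hLpos : (0:ℝ) < L := by positivity
    have hflat : ∀ w ∈ V.direction, ‖w‖ ≤ L * ‖(w : WithLp 2 (X × ℝ)).fst‖ := by
      intro w hw
      have h2 := hsteep w hw
      have hsq := WithLp.prod_norm_sq_eq_of_L2 w
      rw [Real.norm_eq_abs] at hsq
      have h3 : ‖w‖ ^ 2 ≤ ((Kr + 2) * ‖w.fst‖) ^ 2 := by
        nlinarith [norm_nonneg w.fst, abs_nonneg w.snd, sq_nonneg (‖w.fst‖),
          mul_self_le_mul_self (abs_nonneg w.snd) h2]
      have h4 : ‖w‖ ≤ (Kr + 2) * ‖w.fst‖ :=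
        (pow_le_pow_iff_left₀ (norm_nonneg w) (by positivity) two_ne_zero).mp h3
      rw [hL]
      exact h4
    set πl : WithLp 2 (X × ℝ) →ₗ[ℝ] X :=
      (LinearMap.fst ℝ X ℝ).comp (WithLp.linearEquiv 2 ℝ (X × ℝ)).toLinearMap with hπl
    have hπl_apply : ∀ z : WithLp 2 (X × ℝ), πl z = z.fst := fun _ => rfl
    set πa : WithLp 2 (X × ℝ) →ᵃ[ℝ] X := πl.toAffineMap with hπa
    set V' := V.map πa with hV'
    have hdir : V'.direction = V.direction.map πl := by
      rw [hV', AffineSubspace.map_direction, LinearMap.toAffineMap_linear]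
    have hker : ∀ w ∈ V.direction, πl w = 0 → w = 0 := by
      intro w hw h0
      have := hflat w hw
      rw [hπl_apply] at h0
      rw [h0, norm_zero, mul_zero] at this
      exact norm_le_zero_iff.mp this
    have hinj : Function.Injective (πl.domRestrict V.direction) := by
      intro a b hab
      ext
      have hmem : (a : WithLp 2 (X × ℝ)) - b ∈ V.direction := Submodule.sub_mem _ a.2 b.2
      have : πl ((a : WithLp 2 (X × ℝ)) - b) = 0 := by
        rw [map_sub]
        have : πl a = πl b := hab
        rw [this, sub_self]
      have := hker _ hmem this
      exact sub_eq_zero.mp this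
    have hrank : Module.finrank ℝ V'.direction = d := by
      rw [hdir, ← LinearMap.range_domRestrict, ← hV]
      exact (LinearEquiv.finrank_eq (LinearEquiv.ofInjective _ hinj)).symm
    set c' := (m₀ : WithLp 2 (X × ℝ)).fst with hc'
    have hc'V' : c' ∈ V' := AffineSubspace.mem_map.mpr ⟨m₀, hm₀S.1, rfl⟩
    set ρ' := D / (8 * L) with hρ'
    have hρ'pos : 0 < ρ' := by positivity
    set T := (V' : Set X) ∩ Metric.closedBall c' ρ' with hT
    -- diam T ≥ ρ'
    have hTbdd : Bornology.IsBounded T := Metric.isBounded_closedBall.subset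
      Set.inter_subset_right
    have hdiamT : ρ' ≤ Metric.diam T := by
      -- find a nonzero direction in V'
      have hex : ∃ a ∈ S, ∃ b ∈ S, a ≠ b := by
        by_contra h
        push_neg at h
        have : D ≤ 0 := Metric.diam_le_of_forall_dist_le le_rfl
          (fun a ha b hb => by rw [h a ha b hb]; simp)
        linarith
      obtain ⟨a, ha, b, hb, hab⟩ := hex
      have hw₀dir : a - b ∈ V.direction := by
        have := AffineSubspace.vsub_mem_direction ha.1 hb.1
        simpa using this
      have hw₀1 : (a - b).fst ≠ 0 := by
        intro h0
        apply hab
        have := hker (a - b) hw₀dir (by rw [hπl_apply, h0])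
        exact sub_eq_zero.mp this
      set w₁ := (a - b).fst with hw₁
      have hw₁V' : w₁ ∈ V'.direction := by
        rw [hdir]
        exact Submodule.mem_map.mpr ⟨a - b, hw₀dir, rfl⟩
      have hn1 : 0 < ‖w₁‖ := norm_pos_iff.mpr hw₀1
      set z := c' + (ρ' / ‖w₁‖) • w₁ with hz
      have hzV' : z ∈ V' := by
        have := AffineSubspace.vadd_mem_of_mem_direction
          (Submodule.smul_mem V'.direction (ρ' / ‖w₁‖) hw₁V') hc'V'
        simpa [hz, add_comm] using this
      have hdzc : dist z c' = ρ' := by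
        rw [dist_eq_norm, hz, add_sub_cancel_left, norm_smul, Real.norm_eq_abs,
          abs_of_pos (by positivity)]
        field_simp
      have hzT : z ∈ T := ⟨hzV', by rw [Metric.mem_closedBall, hdzc]⟩
      have hc'T : c' ∈ T := ⟨hc'V', Metric.mem_closedBall_self hρ'pos.le⟩
      calc ρ' = dist z c' := hdzc.symm
        _ ≤ Metric.diam T := Metric.dist_le_diam_of_mem hTbdd hzT hc'T
    have hTpos : 0 < Metric.diam T := lt_of_lt_of_le hρ'pos hdiamT
    refine hE V' hrank c' ρ' hρ'pos hTpos ?_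
    intro y' hy'
    have hwd : y' - c' ∈ V'.direction := by
      have := AffineSubspace.vsub_mem_direction hy'.1 hc'V'
      simpa using this
    rw [hdir] at hwd
    obtain ⟨w, hwdir, hww⟩ := Submodule.mem_map.mp hwd
    rw [hπl_apply] at hww
    have hwn : ‖w‖ ≤ D / 8 := by
      have h1 := hflat w hwdir
      have h2 : ‖w.fst‖ ≤ ρ' := by
        rw [hww, ← dist_eq_norm]
        exact Metric.mem_closedBall.mp hy'.2
      calc ‖w‖ ≤ L * ‖w.fst‖ := h1
        _ ≤ L * ρ' := by nlinarith
        _ = D / 8 := by rw [hρ']; field_simp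
    have hmem : m₀ + w ∈ S := hm₀ w hwdir hwn
    obtain ⟨ge, hge, hde⟩ := hsub hmem
    obtain ⟨e, heE, rfl⟩ := hge
    refine ⟨e, heE, ?_⟩
    rw [dist_eq_norm] at hde ⊢
    have h1 : ‖(m₀ + w).fst - e‖ ≤ ε' * D := by
      have h := le_trans (hcomp1 _).1 hde
      exact h
    have h2 : y' - e = (m₀ + w).fst - e := by
      rw [show (m₀ + w).fst = m₀.fst + w.fst from rfl, hww, ← hc']
      abel
    rw [h2]
    refine le_trans h1 ?_
    have hε'1 : ε' ≤ ε₀ / (8 * (Kr + 2)) := min_le_left _ _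
    have h3 : ε' * D ≤ (ε₀ / (8 * (Kr + 2))) * D := mul_le_mul_of_nonneg_right hε'1 hD.le
    have h4 : (ε₀ / (8 * (Kr + 2))) * D = ε₀ * ρ' := by rw [hρ', hL]; ring
    refine le_trans (h3.trans (le_of_eq h4)) ?_
    nlinarith [hdiamT, hε₀.le, hε₀]
end
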